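/- Let n be a positive integer and let b, d be real numbers with d > 0 and b > d + n - 1. Then for every real polynomial g of degree at most n - 1, ∫₀¹ z^{d-1} (1-z)^{b-d-n} ₂F₁(-n, b; d; z) g(z) dz = 0. -/

import Mathlib

/-- The Pochhammer symbol `(x)_k = x (x+1) ⋯ (x+k-1)` for a real number `x`. -/
noncomputable def poch (x : ℝ) (k : ℕ) : ℝ := ∏ i ∈ Finset.range k, (x + i)

/-- The terminating Gauss hypergeometric polynomial `₂F₁(-n, b; d; z)`
    as a real polynomial in `z`. -/
noncomputable def hypPoly (n : ℕ) (b d : ℝ) : Polynomial ℝ :=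
  ∑ k ∈ Finset.range (n + 1),
    Polynomial.C ((poch (-(n : ℝ)) k * poch b k) / (poch d k * (Nat.factorial k))) *
      Polynomial.X ^ k

/-!
Write `F(-n, b; d)` for `₂F₁(-n, b; d; z)`. A contiguous relation between `F(-(n+1), b; d)` and
`F(-n, b+1; d+1)` gives the Rodrigues-type identity
`d z^(d-1) (1-z)^(b-d-n-1) F(-(n+1), b; d) = (z^d (1-z)^(b-d-n) F(-n, b+1; d+1))'`.
Integrating it against `g` by parts, the boundary terms vanish because `d > 0` and `b - d - n > 0`,
and what remains is the orthogonality integral for the parameters `(n, b+1, d+1)` tested against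
`g'`, whose degree is one less. Induction on `n` concludes.
-/

open Polynomial
open scoped Nat

lemma poch_zero (x : ℝ) : poch x 0 = 1 := by simp [poch]

lemma poch_succ_right (x : ℝ) (k : ℕ) : poch x (k + 1) = poch x k * (x + k) :=
  Finset.prod_range_succ _ _

lemma poch_succ_left (x : ℝ) (k : ℕ) : poch x (k + 1) = x * poch (x + 1) k := by
  simp only [poch, Finset.prod_range_succ', Nat.cast_zero, add_zero, Nat.cast_succ, add_assoc,
    add_comm (1 : ℝ)]
  ring

lemma poch_ne_zero {x : ℝ} (hx : ∀ i : ℕ, x + i ≠ 0) (k : ℕ) : poch x k ≠ 0 :=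
  Finset.prod_ne_zero_iff.2 fun i _ => hx i

lemma poch_neg_natCast_eq_zero {n k : ℕ} (h : n < k) : poch (-(n : ℝ)) k = 0 :=
  Finset.prod_eq_zero (Finset.mem_range.2 h) (by simp)

lemma hypPoly_coeff (n : ℕ) (b d : ℝ) (k : ℕ) :
    (hypPoly n b d).coeff k = poch (-(n : ℝ)) k * poch b k / (poch d k * k !) := by
  simp only [hypPoly, finsetSum_coeff, coeff_C_mul, coeff_X_pow, mul_ite, mul_one, mul_zero,
    Finset.sum_ite_eq, Finset.mem_range, ite_eq_left_iff, not_lt]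
  intro hk
  rw [poch_neg_natCast_eq_zero (by omega), zero_mul, zero_div]

lemma hypPoly_coeff_succ_contiguous (m k : ℕ) {b d : ℝ} (hd : ∀ i : ℕ, d + i ≠ 0) :
    (d + k + 1) * (hypPoly m (b + 1) (d + 1)).coeff (k + 1)
      - (b - m + k) * (hypPoly m (b + 1) (d + 1)).coeff k
    = d * (hypPoly (m + 1) b d).coeff (k + 1) := by
  have hd1 : ∀ i : ℕ, d + 1 + i ≠ 0 := fun i => by
    simpa [add_assoc, add_comm (1 : ℝ)] using hd (i + 1)
  have hneg : -((m + 1 : ℕ) : ℝ) + 1 = -(m : ℝ) := by push_cast; ring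
  rw [hypPoly_coeff, hypPoly_coeff, hypPoly_coeff, poch_succ_left (-((m + 1 : ℕ) : ℝ)), hneg,
    poch_succ_left b, poch_succ_left d, poch_succ_right (-(m : ℝ)), poch_succ_right (b + 1),
    poch_succ_right (d + 1), Nat.factorial_succ]
  have hpoch := poch_ne_zero hd1 k
  have hdk := hd1 k
  have hd0 : d ≠ 0 := by simpa using hd 0
  push_cast at *
  field_simp
  ring

lemma degree_derivative_lt_of_degree_lt_succ {R : Type*} [Semiring R] {p : R[X]} {n : ℕ}
    (h : p.degree < ↑(n + 1)) : (derivative p).degree < n := by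
  by_cases hp : p = 0
  · simp [hp]
  · exact (degree_derivative_lt hp).trans_le (Order.lt_succ_iff.1 h)

lemma coeff_X_mul_derivative {R : Type*} [Semiring R] (p : R[X]) (k : ℕ) :
    (X * derivative p).coeff k = k * p.coeff k := by
  cases k with
  | zero => simp
  | succ k => rw [coeff_X_mul, coeff_derivative, ← Nat.cast_succ, Nat.cast_comm]

lemma hypPoly_succ_contiguous (m : ℕ) {b d : ℝ} (hd : ∀ i : ℕ, d + i ≠ 0) :
    C d * hypPoly (m + 1) b d =
      (1 - X) * (C d * hypPoly m (b + 1) (d + 1) + X * derivative (hypPoly m (b + 1) (d + 1)))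
        - C (b - d - m) * X * hypPoly m (b + 1) (d + 1) := by
  ext (_ | k)
  · simp [mul_coeff_zero, hypPoly_coeff, poch_zero]
  · simp only [coeff_C_mul, coeff_sub, coeff_add, sub_mul, one_mul, coeff_X_mul, mul_assoc,
      coeff_X_mul_derivative, coeff_derivative]
    linear_combination -hypPoly_coeff_succ_contiguous m k (b := b) hd

open MeasureTheory Set

lemma intervalIntegrable_rpow_mul_one_sub_rpow {p q : ℝ} (hp : -1 < p) (hq : -1 < q) :
    IntervalIntegrable (fun z : ℝ => z ^ p * (1 - z) ^ q) volume 0 1 := by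
  have left : ∀ {p q : ℝ}, -1 < p →
      IntervalIntegrable (fun z : ℝ => z ^ p * (1 - z) ^ q) volume 0 (1 / 2) := by
    intro p q hp
    refine (intervalIntegral.intervalIntegrable_rpow' hp).mul_continuousOn
      (ContinuousOn.rpow_const (continuousOn_const.sub continuousOn_id) fun z hz => Or.inl ?_)
    rw [uIcc_of_le (by norm_num)] at hz
    linarith [hz.2]
  have right := ((left (q := p) hq).comp_sub_left 1).symm
  norm_num at right
  exact (left hp).trans (by simpa only [mul_comm] using right)

lemma hasDerivAt_rpow_mul_one_sub_rpow_mul_hypPoly (m : ℕ) {b d : ℝ}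
    (hd : ∀ i : ℕ, d + i ≠ 0) {z : ℝ} (hz : z ∈ Ioo (0 : ℝ) 1) :
    HasDerivAt (fun t => t ^ d * (1 - t) ^ (b - d - m) * (hypPoly m (b + 1) (d + 1)).eval t)
      (z ^ (d - 1) * (1 - z) ^ (b - d - m - 1) * (d * (hypPoly (m + 1) b d).eval z)) z := by
  have hz0 : z ≠ 0 := hz.1.ne'
  have hz1 : 1 - z ≠ 0 := sub_ne_zero.2 hz.2.ne'
  have h := ((Real.hasDerivAt_rpow_const (p := d) (Or.inl hz0)).mul
    (((hasDerivAt_id z).const_sub 1).rpow_const (p := b - d - m) (Or.inl hz1))).mul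
    ((hypPoly m (b + 1) (d + 1)).hasDerivAt z)
  refine h.congr_deriv ?_
  have hF := congrArg (eval z) (hypPoly_succ_contiguous m (b := b) hd)
  simp only [eval_mul, eval_add, eval_sub, eval_C, eval_X, eval_one] at hF
  simp only [Pi.mul_apply, id]
  rw [hF, Real.rpow_sub_one hz0, Real.rpow_sub_one hz1]
  field_simp
  ring

lemma integral_hypPoly_succ_mul_eq_neg_integral_mul_derivative (m : ℕ) {b d : ℝ} (hd : 0 < d)
    (hb : d + m < b) (g : ℝ[X]) :
    d * ∫ z in (0 : ℝ)..1,
        z ^ (d - 1) * (1 - z) ^ (b - d - m - 1) * (hypPoly (m + 1) b d).eval z * g.eval z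
      = -∫ z in (0 : ℝ)..1,
        z ^ d * (1 - z) ^ (b - d - m) * (hypPoly m (b + 1) (d + 1)).eval z *
          (derivative g).eval z := by
  have hβ : 0 < b - d - m := by linarith
  have hu : Continuous fun t : ℝ =>
      t ^ d * (1 - t) ^ (b - d - m) * (hypPoly m (b + 1) (d + 1)).eval t :=
    ((Real.continuous_rpow_const hd.le).mul
      ((Real.continuous_rpow_const hβ.le).comp (continuous_const.sub continuous_id))).mul
      (hypPoly m (b + 1) (d + 1)).continuous
  have hu' : IntervalIntegrable
      (fun z : ℝ => z ^ (d - 1) * (1 - z) ^ (b - d - m - 1) * (d * (hypPoly (m + 1) b d).eval z))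
      volume 0 1 :=
    (intervalIntegrable_rpow_mul_one_sub_rpow (by linarith) (by linarith)).mul_continuousOn
      (continuous_const.mul (hypPoly (m + 1) b d).continuous).continuousOn
  have hparts := intervalIntegral.integral_mul_deriv_eq_deriv_mul_of_hasDerivAt hu.continuousOn
    g.continuous.continuousOn
    (fun z hz => hasDerivAt_rpow_mul_one_sub_rpow_mul_hypPoly m (fun i => by positivity)
      (by simpa using hz))
    (fun z _ => g.hasDerivAt z) hu' ((derivative g).continuous.intervalIntegrable _ _)
  rw [hparts, sub_self, Real.zero_rpow hβ.ne', Real.zero_rpow hd.ne',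
    ← intervalIntegral.integral_const_mul]
  simp only [mul_zero, zero_mul, sub_zero, zero_sub, neg_neg]
  refine intervalIntegral.integral_congr fun z _ => ?_
  ring

theorem integral_rpow_mul_one_sub_rpow_mul_hypPoly_mul_eq_zero (n : ℕ) {b d : ℝ} (hd : 0 < d)
    (hb : d + n - 1 < b) {g : ℝ[X]} (hg : g.degree < n) :
    ∫ z in (0 : ℝ)..1, z ^ (d - 1) * (1 - z) ^ (b - d - n) * (hypPoly n b d).eval z * g.eval z
      = 0 := by
  induction n generalizing b d g with
  | zero => simp [degree_eq_bot.1 (Nat.WithBot.lt_zero_iff.1 hg)]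
  | succ m ih =>
    push_cast at hb ⊢
    have hderiv := ih (b := b + 1) (d := d + 1) (by linarith) (by linarith)
      (degree_derivative_lt_of_degree_lt_succ hg)
    rw [add_sub_cancel_right, add_sub_add_right_eq_sub] at hderiv
    have hparts := integral_hypPoly_succ_mul_eq_neg_integral_mul_derivative m (b := b) hd
      (by linarith) g
    rw [hderiv, neg_zero] at hparts
    rw [← sub_sub]
    exact (mul_eq_zero.1 hparts).resolve_left hd.ne'

theorem hyp_orthogonality_unit_interval_general (n : ℕ) (b d : ℝ)
    (hd : 0 < d) (hb : b > d + n - 1) (g : Polynomial ℝ) (hg : g.natDegree < n) :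
    ∫ z in (0 : ℝ)..1,
      Real.rpow z (d - 1) * Real.rpow (1 - z) (b - d - n) *
        (hypPoly n b d).eval z * g.eval z = 0 :=
  integral_rpow_mul_one_sub_rpow_mul_hypPoly_mul_eq_zero n hd hb
    (degree_le_natDegree.trans_lt (by exact_mod_cast hg))

/-- For `d > 0` and `b > d + n - 1`, the polynomial `₂F₁(-n, b; d; z)` is orthogonal on
`(0, 1)` with respect to the weight `z^(d-1) (1-z)^(b-d-n)` to every real polynomial `g`
of degree at most `n - 1`. -/
theorem hyp_orthogonality_unit_interval (n : ℕ) (hn : 0 < n) (b d : ℝ)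
    (hd : 0 < d) (hb : b > d + n - 1) (g : Polynomial ℝ) (hg : g.natDegree < n) :
    ∫ z in (0 : ℝ)..1,
      Real.rpow z (d - 1) * Real.rpow (1 - z) (b - d - n) *
        (hypPoly n b d).eval z * g.eval z = 0 :=
  hyp_orthogonality_unit_interval_general n b d hd hb g hg
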